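/- arXiv:2510.20755 — 2 statements merged into one kernel-verified Lean document; each statement's English description precedes it below -/
import Mathlib

section
/- Let D be an r-equireplicate design of order k = 2 on V = {1,…,n}, let X₁,…,Xₙ be i.i.d., and let h be a symmetric measurable kernel of 2 arguments with σ₂² < ∞. Then the variance of the incomplete U-statistic satisfies Var U_{n,D}^{(2)} = |D|⁻¹ (2(r−1)σ₁² + σ₂²), and this variance is minimal among all incomplete U-statistics of second order with the same design size: for every design D' ⊆ B₂ with |D'| = |D| one has Var U_{n,D}^{(2)} ≤ Var U_{n,D'}^{(2)}. -/
/-!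
Expanding the variance of the average over `D`, each ordered pair of blocks `(S, S')`
contributes `σ_{|S ∩ S'|}²`, and `σ₀² = 0` by independence. Two distinct 2-subsets meet in at
most one point, so by double counting
`Var U = |D|⁻² (|D| (σ₂² - 2σ₁²) + σ₁² ∑_v deg_D(v)²)`.
Since `∑_v deg_D(v) = 2|D|` is fixed by `|D|`, the sum of squared degrees is smallest when all
degrees are equal, i.e. for equireplicate designs; it remains to see `σ₁² ≥ 0`.
-/

open MeasureTheory ProbabilityTheory Filter Finset

namespace IUStat

/-- Degree of an index `v` in a design `D`: number of blocks containing `v`. -/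
def degree (D : Finset (Finset ℕ)) (v : ℕ) : ℕ := (D.filter (fun S => v ∈ S)).card

/-- Maximum degree of the hypergraph of a design on `V = {1,…,n}`. -/
def maxDegree (n : ℕ) (D : Finset (Finset ℕ)) : ℕ := (Finset.Icc 1 n).sup (degree D)

/-- Degree of a block `S` in the line graph `L(D)` (counting `S` itself). -/
def lineDegree (D : Finset (Finset ℕ)) (S : Finset ℕ) : ℕ :=
  (D.filter (fun S' => (S ∩ S').Nonempty)).card

/-- Maximum degree of the line graph of a design. -/
def maxLineDegree (D : Finset (Finset ℕ)) : ℕ := D.sup (lineDegree D)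

/-- The random variable `h(S)` obtained by applying the symmetric kernel `h` to the
sample values indexed by the (sorted) elements of the block `S`.  Since `h` is
symmetric in its arguments, the choice of the increasing enumeration is immaterial. -/
noncomputable def blockRV {Ω T : Type*} [MeasurableSpace T] {k : ℕ}
    (X : ℕ → Ω → T) (h : (Fin k → T) → ℝ) (S : Finset ℕ) : Ω → ℝ :=
  fun ω => h (fun j => X ((S.sort (· ≤ ·)).getD (j : ℕ) 0) ω)

/-- The incomplete U-statistic of design `D`. -/
noncomputable def ustat {Ω T : Type*} [MeasurableSpace T] {k : ℕ}
    (D : Finset (Finset ℕ)) (X : ℕ → Ω → T) (h : (Fin k → T) → ℝ) : Ω → ℝ :=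
  fun ω => (D.card : ℝ)⁻¹ * ∑ S ∈ D, blockRV X h S ω

/-- Covariance of two real random variables. -/
noncomputable def covRV {Ω : Type*} [MeasurableSpace Ω] (P : Measure Ω) (f g : Ω → ℝ) : ℝ :=
  ∫ ω, (f ω - ∫ x, f x ∂P) * (g ω - ∫ x, g x ∂P) ∂P

/-- Standard normal CDF. -/
noncomputable def Φ : ℝ → ℝ := fun z => ProbabilityTheory.cdf (gaussianReal 0 1) z

/-- `a mod m` with a remainder of zero relabeled as `m`. -/
def modr (a m : ℕ) : ℕ := if a % m = 0 then m else a % m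

/-- Unbiased sample variance of the collection `{h(S) : S ∈ D}`. -/
noncomputable def sampleVar {Ω T : Type*} [MeasurableSpace T] {k : ℕ}
    (D : Finset (Finset ℕ)) (X : ℕ → Ω → T) (h : (Fin k → T) → ℝ) : Ω → ℝ :=
  fun ω => ((D.card : ℝ) - 1)⁻¹ * ∑ S ∈ D, (blockRV X h S ω - ustat D X h ω) ^ 2

lemma covRV_eq_covariance {Ω : Type*} [MeasurableSpace Ω] (P : Measure Ω) (f g : Ω → ℝ) :
    covRV P f g = cov[f, g; P] := rfl

section Design

variable {D : Finset (Finset ℕ)} {V : Finset ℕ}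

lemma sum_degree_eq_sum_card (hD : ∀ S ∈ D, S ⊆ V) :
    ∑ v ∈ V, degree D v = ∑ S ∈ D, #S := by
  simp_rw [degree, card_eq_sum_ones, sum_filter]
  rw [sum_comm]
  refine sum_congr rfl fun S hS => ?_
  rw [← sum_filter, filter_mem_eq_inter, inter_eq_right.mpr (hD S hS)]

lemma sum_sum_card_inter_eq_sum_degree_sq (hD : ∀ S ∈ D, S ⊆ V) :
    ∑ S ∈ D, ∑ S' ∈ D, #(S ∩ S') = ∑ v ∈ V, degree D v ^ 2 := by
  have hinter : ∀ S ∈ D, ∀ S', #(S ∩ S') =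
      ∑ v ∈ V, ((if v ∈ S then 1 else 0) * (if v ∈ S' then 1 else 0) : ℕ) := by
    intro S hS S'
    rw [← inter_eq_right.mpr (inter_subset_left.trans (hD S hS)), ← filter_mem_eq_inter,
      card_filter]
    simp only [mem_inter, ite_zero_mul_ite_zero, mul_one]
  simp_rw [degree, card_filter, sq, sum_mul_sum]
  rw [sum_congr rfl fun S hS => (sum_congr rfl fun S' _ => hinter S hS S').trans sum_comm,
    sum_comm]

end Design

lemma card_inter_le_one_of_ne {S S' : Finset ℕ} (hS : #S = 2) (hS' : #S' = 2) (hne : S ≠ S') :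
    #(S ∩ S') ≤ 1 := by
  by_contra! h
  have hle : #(S ∩ S') ≤ 2 := hS ▸ card_le_card inter_subset_left
  exact hne ((eq_of_subset_of_card_le inter_subset_left (by omega)).symm.trans
    (eq_of_subset_of_card_le inter_subset_right (by omega)))

lemma sigma_card_inter_eq {σ : ℕ → ℝ} (hσ0 : σ 0 = 0) {S S' : Finset ℕ} (hS : #S = 2)
    (hS' : #S' = 2) :
    σ #(S ∩ S') = #(S ∩ S') * σ 1 + if S = S' then σ 2 - 2 * σ 1 else 0 := by
  by_cases hne : S = S'
  · subst hne
    rw [inter_self, hS, if_pos rfl]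
    push_cast; ring
  · rw [if_neg hne, add_zero]
    have hle := card_inter_le_one_of_ne hS hS' hne
    interval_cases #(S ∩ S')
    · simp [hσ0]
    · simp

lemma card_mul_sq_le_sum_sq {ι : Type*} (s : Finset ι) (f : ι → ℝ) {c : ℝ}
    (hf : ∑ i ∈ s, f i = #s * c) : #s * c ^ 2 ≤ ∑ i ∈ s, f i ^ 2 := by
  have h := sum_nonneg fun i (_ : i ∈ s) => sq_nonneg (f i - c)
  simp_rw [sub_sq, sum_add_distrib, sum_sub_distrib, ← sum_mul, ← mul_sum, hf, sum_const,
    nsmul_eq_mul] at h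
  linarith

lemma nonneg_of_forall_nat_add_mul_nonneg {a b : ℝ} (h : ∀ m : ℕ, 0 ≤ a + m * b) : 0 ≤ b := by
  by_contra! hb
  obtain ⟨m, hm⟩ := exists_nat_gt (a / -b)
  rw [div_lt_iff₀ (neg_pos.mpr hb)] at hm
  linarith [h m]

lemma blockRV_pair {Ω T : Type*} [MeasurableSpace T] (X : ℕ → Ω → T) (h : (Fin 2 → T) → ℝ)
    {a b : ℕ} (hab : a < b) :
    blockRV X h {a, b} = fun ω => h ![X a ω, X b ω] := by
  have hsort : ({a, b} : Finset ℕ).sort (· ≤ ·) = [a, b] := by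
    rw [sort_insert (r := (· ≤ ·)) (s := {b}) (by simp [hab.le]) (by simp [hab.ne]),
      sort_singleton]
  ext ω
  simp only [blockRV, hsort]
  congr 1
  ext j
  fin_cases j <;> rfl

section Probability

variable {Ω T : Type*} [MeasurableSpace Ω] [MeasurableSpace T] {P : Measure Ω}

lemma variance_ustat_eq_sum_covRV [IsFiniteMeasure P] {k : ℕ} (D : Finset (Finset ℕ))
    (X : ℕ → Ω → T) (h : (Fin k → T) → ℝ) (hL2 : ∀ S ∈ D, MemLp (blockRV X h S) 2 P) :
    variance (ustat D X h) P
      = (#D : ℝ)⁻¹ ^ 2 * ∑ S ∈ D, ∑ S' ∈ D, covRV P (blockRV X h S) (blockRV X h S') := by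
  have hsum : (fun ω => ∑ S ∈ D, blockRV X h S ω) = ∑ S ∈ D, blockRV X h S := by
    ext ω; rw [Finset.sum_apply]
  unfold ustat
  rw [variance_const_mul, hsum, variance_sum' hL2]
  rfl

lemma variance_ustat_of_card_eq_two [IsFiniteMeasure P] {σ : ℕ → ℝ} (hσ0 : σ 0 = 0)
    {D : Finset (Finset ℕ)} {V : Finset ℕ} (hD : ∀ S ∈ D, #S = 2 ∧ S ⊆ V)
    (X : ℕ → Ω → T) (h : (Fin 2 → T) → ℝ) (hL2 : ∀ S ∈ D, MemLp (blockRV X h S) 2 P)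
    (hcov : ∀ S ∈ D, ∀ S' ∈ D, covRV P (blockRV X h S) (blockRV X h S') = σ #(S ∩ S')) :
    variance (ustat D X h) P
      = (#D : ℝ)⁻¹ ^ 2 * ((∑ v ∈ V, (degree D v : ℝ) ^ 2) * σ 1 + #D * (σ 2 - 2 * σ 1)) := by
  have hpairs : ∑ S ∈ D, ∑ S' ∈ D, covRV P (blockRV X h S) (blockRV X h S')
      = ∑ S ∈ D, ∑ S' ∈ D, ((#(S ∩ S') : ℝ) * σ 1 + if S = S' then σ 2 - 2 * σ 1 else 0) :=
    sum_congr rfl fun S hS => sum_congr rfl fun S' hS' => by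
      rw [hcov S hS S' hS', sigma_card_inter_eq hσ0 (hD S hS).1 (hD S' hS').1]
  have hdeg : ∑ S ∈ D, ∑ S' ∈ D, (#(S ∩ S') : ℝ) = ∑ v ∈ V, (degree D v : ℝ) ^ 2 := by
    exact_mod_cast sum_sum_card_inter_eq_sum_degree_sq fun S hS => (hD S hS).2
  rw [variance_ustat_eq_sum_covRV D X h hL2, hpairs]
  simp only [sum_add_distrib, sum_ite_eq, ← sum_mul, hdeg, sum_ite_mem, inter_self, sum_const,
    nsmul_eq_mul]

lemma indepFun_blockRV_pair {X : ℕ → Ω → T} (hXmeas : ∀ i, Measurable (X i))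
    (hXindep : iIndepFun X P) {h : (Fin 2 → T) → ℝ} (hh : Measurable h) {a b c d : ℕ}
    (hab : a < b) (hcd : c < d) (hac : a ≠ c) (had : a ≠ d) (hbc : b ≠ c) (hbd : b ≠ d) :
    IndepFun (blockRV X h {a, b}) (blockRV X h {c, d}) P := by
  have hφ : Measurable fun p : T × T => h ![p.1, p.2] :=
    hh.comp <| measurable_pi_iff.mpr fun j => by
      fin_cases j <;> [exact measurable_fst; exact measurable_snd]
  rw [blockRV_pair X h hab, blockRV_pair X h hcd]
  exact (hXindep.indepFun_prodMk_prodMk hXmeas a b c d hac had hbc hbd).comp hφ hφ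

/-- The variance of `∑ i ≤ m, f {0, i + 1}` (a star of `m + 1` blocks) is
`(m + 1) (σ 2 + m σ 1)`, so `σ 1 < 0` would make it negative for large `m`. -/
lemma sigma_one_nonneg [IsFiniteMeasure P] {σ : ℕ → ℝ} (f : Finset ℕ → Ω → ℝ)
    (hL2 : ∀ S, #S = 2 → MemLp (f S) 2 P)
    (hcov : ∀ S S', #S = 2 → #S' = 2 → covRV P (f S) (f S') = σ #(S ∩ S')) :
    0 ≤ σ 1 := by
  refine nonneg_of_forall_nat_add_mul_nonneg (a := σ 2) fun m => ?_
  let B : ℕ → Finset ℕ := fun i => {0, i + 1}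
  have hB : ∀ i, #(B i) = 2 := fun i => card_pair (by omega)
  have hcovB : ∀ i j, covRV P (f (B i)) (f (B j)) = σ 1 + if i = j then σ 2 - σ 1 else 0 := by
    intro i j
    by_cases hij : i = j
    · rw [hcov _ _ (hB i) (hB j), if_pos hij, hij, inter_self, hB j]; ring
    · have hinter : B i ∩ B j = {0} := by
        ext x; simp only [B, mem_inter, mem_insert, mem_singleton]; omega
      rw [hcov _ _ (hB i) (hB j), if_neg hij, hinter, card_singleton, add_zero]
  have hvar := variance_sum' (μ := P) (s := range (m + 1)) (X := fun i => f (B i))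
    fun i _ => hL2 _ (hB i)
  simp only [← covRV_eq_covariance, hcovB, sum_add_distrib, sum_ite_eq, sum_ite_mem, inter_self,
    sum_const, card_range, nsmul_eq_mul] at hvar
  have hnonneg := hvar ▸ variance_nonneg _ P
  push_cast at hnonneg
  nlinarith

end Probability

theorem variance_equireplicate_k2_min_general {Ω T : Type*} [MeasurableSpace Ω] {mT : MeasurableSpace T}
    (P : Measure Ω) [IsProbabilityMeasure P]
    (X : ℕ → Ω → T) (hXmeas : ∀ i, Measurable (X i))
    (hXindep : iIndepFun X P)
    (n r : ℕ) (h : (Fin 2 → T) → ℝ) (hhmeas : Measurable h)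
    (D : Finset (Finset ℕ))
    (hD : ∀ S ∈ D, S.card = 2 ∧ S ⊆ Finset.Icc 1 n)
    (hequi : ∀ v ∈ Finset.Icc 1 n, degree D v = r)
    (σsq : ℕ → ℝ)
    (hL2 : ∀ S : Finset ℕ, S.card = 2 → MemLp (blockRV X h S) 2 P)
    (hcov : ∀ S₁ S₂ : Finset ℕ, S₁.card = 2 → S₂.card = 2 →
      covRV P (blockRV X h S₁) (blockRV X h S₂) = σsq (S₁ ∩ S₂).card) :
    variance (ustat D X h) P
        = (D.card : ℝ)⁻¹ * (2 * ((r : ℝ) - 1) * σsq 1 + σsq 2) ∧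
    ∀ D' : Finset (Finset ℕ), (∀ S ∈ D', S.card = 2 ∧ S ⊆ Finset.Icc 1 n) →
      D'.card = D.card →
      variance (ustat D X h) P ≤ variance (ustat D' X h) P := by
  have hσ0 : σsq 0 = 0 := by
    have h01 : #({0, 1} : Finset ℕ) = 2 := card_pair (by norm_num)
    have h23 : #({2, 3} : Finset ℕ) = 2 := card_pair (by norm_num)
    rw [← (indepFun_blockRV_pair hXmeas hXindep hhmeas (by norm_num) (by norm_num) (by norm_num)
      (by norm_num) (by norm_num) (by norm_num)).covariance_eq_zero (hL2 _ h01) (hL2 _ h23),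
      ← covRV_eq_covariance, hcov _ _ h01 h23]
    rfl
  have hσ1 : 0 ≤ σsq 1 := sigma_one_nonneg _ hL2 hcov
  have hvar : ∀ D' : Finset (Finset ℕ), (∀ S ∈ D', #S = 2 ∧ S ⊆ Icc 1 n) →
      variance (ustat D' X h) P = (#D' : ℝ)⁻¹ ^ 2 *
        ((∑ v ∈ Icc 1 n, (degree D' v : ℝ) ^ 2) * σsq 1 + #D' * (σsq 2 - 2 * σsq 1)) :=
    fun D' hD' => variance_ustat_of_card_eq_two hσ0 hD' X h (fun S hS => hL2 S (hD' S hS).1)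
      fun S hS S' hS' => hcov S S' (hD' S hS).1 (hD' S' hS').1
  have hdeg : ∀ D' : Finset (Finset ℕ), (∀ S ∈ D', #S = 2 ∧ S ⊆ Icc 1 n) →
      ∑ v ∈ Icc 1 n, (degree D' v : ℝ) = 2 * #D' := by
    intro D' hD'
    have := (sum_degree_eq_sum_card fun S hS => (hD' S hS).2).trans
      (sum_const_nat fun S hS => (hD' S hS).1)
    rw [← Nat.cast_sum, this]
    push_cast
    ring
  have hnr : (#(Icc 1 n) : ℝ) * r = 2 * #D := by
    rw [← hdeg D hD, sum_congr rfl fun v hv => by rw [hequi v hv], sum_const, nsmul_eq_mul]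
  have hsq : ∑ v ∈ Icc 1 n, (degree D v : ℝ) ^ 2 = #(Icc 1 n) * r ^ 2 := by
    rw [sum_congr rfl fun v hv => by rw [hequi v hv], sum_const, nsmul_eq_mul]
  refine ⟨?_, fun D' hD' hcard => ?_⟩
  · have hinv : (#D : ℝ)⁻¹ ^ 2 * #D = (#D : ℝ)⁻¹ := by
      simpa only [inv_inv, ← sq] using mul_self_mul_inv (#D : ℝ)⁻¹
    rw [hvar D hD, hsq, sq (r : ℝ), ← mul_assoc, hnr]
    linear_combination (2 * ((r : ℝ) - 1) * σsq 1 + σsq 2) * hinv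
  · rw [hvar D hD, hvar D' hD', hcard, hsq]
    gcongr
    exact card_mul_sq_le_sum_sq _ _ (by rw [hdeg D' hD', hcard, hnr])

/-- For `k = 2` and an `r`-equireplicate design `D`, the incomplete
U-statistic has variance `|D|⁻¹ (2(r−1)σ₁² + σ₂²)`, which is minimal among all incomplete
U-statistics of second order with the same design size. -/
theorem variance_equireplicate_k2_min {Ω T : Type*} [MeasurableSpace Ω] {mT : MeasurableSpace T}
    (P : Measure Ω) [IsProbabilityMeasure P]
    (X : ℕ → Ω → T) (hXmeas : ∀ i, Measurable (X i))
    (hXindep : iIndepFun X P)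
    (hXident : ∀ i j, IdentDistrib (X i) (X j) P P)
    (n r : ℕ) (h : (Fin 2 → T) → ℝ) (hhmeas : Measurable h)
    (hhsymm : ∀ (e : Equiv.Perm (Fin 2)) (x : Fin 2 → T), h (x ∘ e) = h x)
    (D : Finset (Finset ℕ)) (hDne : D.Nonempty)
    (hD : ∀ S ∈ D, S.card = 2 ∧ S ⊆ Finset.Icc 1 n)
    (hequi : ∀ v ∈ Finset.Icc 1 n, degree D v = r)
    (σsq : ℕ → ℝ)
    (hL2 : ∀ S : Finset ℕ, S.card = 2 → MemLp (blockRV X h S) 2 P)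
    (hcov : ∀ S₁ S₂ : Finset ℕ, S₁.card = 2 → S₂.card = 2 →
      covRV P (blockRV X h S₁) (blockRV X h S₂) = σsq (S₁ ∩ S₂).card) :
    variance (ustat D X h) P
        = (D.card : ℝ)⁻¹ * (2 * ((r : ℝ) - 1) * σsq 1 + σsq 2) ∧
    ∀ D' : Finset (Finset ℕ), (∀ S ∈ D', S.card = 2 ∧ S ⊆ Finset.Icc 1 n) →
      D'.card = D.card →
      variance (ustat D X h) P ≤ variance (ustat D' X h) P :=
  variance_equireplicate_k2_min_general (mT := mT) P X hXmeas hXindep n r h hhmeas D hD hequi σsq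
    hL2 hcov

end IUStat
end

section
/- Let D be a non-equireplicate deterministic design of order k on V = {1,…,n} and let D† be an r-equireplicate design of order k on V. (i) If r < (Δ(D) − 1)/k + 1, then Δ(L(D†)) < Δ(L(D)). (ii) If moreover k = 2 and |D| = |D†|, then Δ(L(D†)) < Δ(L(D)) holds without any condition on r. -/
/-!
Every block `S` of an `r`-equireplicate design of order `k` meets at most `k (r - 1)` other
blocks, so `Δ(L(D†)) ≤ 1 + k (r - 1)`, while `Δ(L(D)) ≥ Δ(D)` because all blocks through an
index of maximal degree meet each other. This gives (i).

For (ii), equal sizes make the degrees of `D` average to `r` as well. Since they are not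
constant, `∑_v d(v)² > n r²`, and double counting `∑_S ∑_{v ∈ S} d(v) = ∑_v d(v)²` yields a
block `{u, w}` with `d(u) + d(w) > 2r`. As no other block contains both `u` and `w`, this block
meets at least `d(u) + d(w) - 1 ≥ 2r > 1 + 2 (r - 1)` blocks.
-/

open MeasureTheory ProbabilityTheory Filter Finset

namespace IUStat

def IsDesign (n k : ℕ) (D : Finset (Finset ℕ)) : Prop :=
  ∀ S ∈ D, S.card = k ∧ S ⊆ Finset.Icc 1 n

def IsEquireplicate (n r : ℕ) (D : Finset (Finset ℕ)) : Prop :=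
  ∀ v ∈ Finset.Icc 1 n, degree D v = r

section Degrees

variable {D : Finset (Finset ℕ)} {S : Finset ℕ} {u v w : ℕ}

lemma degree_le_lineDegree (hv : v ∈ S) : degree D v ≤ lineDegree D S :=
  card_le_card fun S' h => by
    simp only [mem_filter] at h ⊢
    exact ⟨h.1, v, mem_inter.2 ⟨hv, h.2⟩⟩

lemma maxDegree_le_maxLineDegree (n : ℕ) (D : Finset (Finset ℕ)) :
    maxDegree n D ≤ maxLineDegree D := by
  refine Finset.sup_le fun v _ => ?_
  rcases Nat.eq_zero_or_pos (degree D v) with h | h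
  · exact h ▸ Nat.zero_le _
  · obtain ⟨S, hS⟩ := card_pos.1 h
    rw [mem_filter] at hS
    exact (degree_le_lineDegree hS.2).trans (le_sup hS.1)

/-- Every block meeting `S` is either `S` itself or another block through one of its indices. -/
lemma lineDegree_le_one_add_sum (hS : S ∈ D) :
    lineDegree D S ≤ 1 + ∑ v ∈ S, (degree D v - 1) := by
  have hsub : D.filter (fun S' => (S ∩ S').Nonempty) ⊆
      insert S (S.biUnion fun v => (D.filter (v ∈ ·)).erase S) := by
    intro S' hS'
    obtain ⟨hS'D, w, hw⟩ := mem_filter.1 hS'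
    rw [mem_inter] at hw
    by_cases h : S' = S
    · exact h ▸ mem_insert_self _ _
    · exact mem_insert_of_mem <|
        mem_biUnion.2 ⟨w, hw.1, mem_erase.2 ⟨h, mem_filter.2 ⟨hS'D, hw.2⟩⟩⟩
  calc lineDegree D S ≤ _ := card_le_card hsub
    _ ≤ 1 + (S.biUnion fun v => (D.filter (v ∈ ·)).erase S).card := by
        rw [add_comm]; exact card_insert_le _ _
    _ ≤ 1 + ∑ v ∈ S, ((D.filter (v ∈ ·)).erase S).card := by gcongr; exact card_biUnion_le
    _ = 1 + ∑ v ∈ S, (degree D v - 1) := by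
        congr 1
        refine sum_congr rfl fun v hv => ?_
        rw [card_erase_of_mem (mem_filter.2 ⟨hS, hv⟩), degree]

/-- In a design of order two, `{u, w}` is the only block through both `u` and `w`. -/
lemma degree_add_degree_le_lineDegree_add_one (hD : ∀ S ∈ D, S.card = 2) (huw : u ≠ w) :
    degree D u + degree D w ≤ lineDegree D {u, w} + 1 := by
  rw [degree, degree, ← card_union_add_card_inter]
  refine add_le_add (card_le_card fun S' hS' => ?_) (card_le_one.2 fun A hA B hB => ?_)
  · rw [mem_union, mem_filter, mem_filter] at hS'
    rw [mem_filter]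
    rcases hS' with ⟨hS'D, hu⟩ | ⟨hS'D, hw⟩
    · exact ⟨hS'D, u, by simp [hu]⟩
    · exact ⟨hS'D, w, by simp [hw]⟩
  · have pair_eq : ∀ S' ∈ D.filter (u ∈ ·) ∩ D.filter (w ∈ ·), S' = {u, w} := by
      intro S' hS'
      simp only [mem_inter, mem_filter] at hS'
      refine (eq_of_subset_of_card_le ?_ ?_).symm
      · exact insert_subset hS'.1.2 (singleton_subset_iff.2 hS'.2.2)
      · rw [card_pair huw, hD S' hS'.1.1]
    rw [pair_eq A hA, pair_eq B hB]

lemma sum_sum_eq_sum_degree_smul {M : Type*} [AddCommMonoid M] {V : Finset ℕ}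
    (hD : ∀ S ∈ D, S ⊆ V) (f : ℕ → M) :
    ∑ S ∈ D, ∑ v ∈ S, f v = ∑ v ∈ V, degree D v • f v := by
  rw [sum_comm' (t' := V) (s' := fun v => D.filter (v ∈ ·))]
  · simp only [sum_const, degree]
  · intro S v
    simp only [mem_filter]
    exact ⟨fun h => ⟨⟨h.1, h.2⟩, hD S h.1 h.2⟩, fun h => ⟨h.1.1, h.1.2⟩⟩

end Degrees

lemma sum_sq_lt_sum_sq_of_sum_eq {ι R : Type*} [CommRing R] [LinearOrder R]
    [IsStrictOrderedRing R] {s : Finset ι} {f : ι → R} {c : R}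
    (hsum : ∑ i ∈ s, f i = ∑ _i ∈ s, c) (hne : ∃ i ∈ s, f i ≠ c) :
    ∑ _i ∈ s, c ^ 2 < ∑ i ∈ s, f i ^ 2 := by
  obtain ⟨i, hi, hfi⟩ := hne
  have hpos : 0 < ∑ i ∈ s, (f i - c) ^ 2 :=
    sum_pos' (fun _ _ => sq_nonneg _) ⟨i, hi, sq_pos_of_ne_zero (sub_ne_zero.2 hfi)⟩
  have hexpand : ∑ i ∈ s, (f i - c) ^ 2 = ∑ i ∈ s, f i ^ 2 - ∑ i ∈ s, c ^ 2 := by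
    have hterm : ∀ i, (f i - c) ^ 2 = f i ^ 2 - 2 * c * f i + c ^ 2 := fun i => by ring
    have hcross : ∑ i ∈ s, 2 * c * f i = 2 * ∑ i ∈ s, c ^ 2 := by
      rw [← mul_sum, hsum, mul_sum, mul_sum]
      exact sum_congr rfl fun _ _ => by ring
    simp only [hterm]
    rw [sum_add_distrib, sum_sub_distrib, hcross]
    ring
  linarith

namespace IsDesign

variable {n k r : ℕ} {D Dd : Finset (Finset ℕ)}

lemma sum_degree (hD : IsDesign n k D) : ∑ v ∈ Icc 1 n, degree D v = k * D.card := by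
  have h := sum_sum_eq_sum_degree_smul (fun S hS => (hD S hS).2) (fun _ => 1)
  simp only [sum_const, smul_eq_mul, mul_one] at h
  rw [← h, sum_congr rfl fun S hS => (hD S hS).1, sum_const, smul_eq_mul, mul_comm]

lemma isEquireplicate_zero (hD : IsDesign n 0 D) : IsEquireplicate n 0 D := by
  intro v _
  rw [degree, card_eq_zero, filter_eq_empty_iff]
  intro S hS
  simp [card_eq_zero.1 (hD S hS).1]

lemma eq_empty_of_isEquireplicate_zero (hD : IsDesign n k D) (hk : 0 < k)
    (h : IsEquireplicate n 0 D) : D = ∅ := by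
  refine eq_empty_of_forall_notMem fun S hS => ?_
  obtain ⟨v, hv⟩ := card_pos.1 ((hD S hS).1 ▸ hk)
  have : 0 < degree D v := card_pos.2 ⟨S, mem_filter.2 ⟨hS, hv⟩⟩
  rw [h v ((hD S hS).2 hv)] at this
  exact this.false

lemma maxLineDegree_le (hD : IsDesign n k D) (h : IsEquireplicate n r D) :
    maxLineDegree D ≤ 1 + k * (r - 1) := by
  refine Finset.sup_le fun S hS => (lineDegree_le_one_add_sum hS).trans_eq ?_
  rw [sum_congr rfl fun v hv => by rw [h v ((hD S hS).2 hv)], sum_const, (hD S hS).1,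
    smul_eq_mul]

lemma exists_sum_degree_gt (hD : IsDesign n k D) (hDd : IsDesign n k Dd)
    (hcard : D.card = Dd.card) (hDd_r : IsEquireplicate n r Dd)
    (hD_r : ¬ IsEquireplicate n r D) : ∃ S ∈ D, k * r < ∑ v ∈ S, degree D v := by
  have hsum : ∑ v ∈ Icc 1 n, degree D v = ∑ v ∈ Icc 1 n, r := by
    rw [hD.sum_degree, hcard, ← hDd.sum_degree, sum_congr rfl hDd_r]
  have hne : ∃ v ∈ Icc 1 n, degree D v ≠ r := by
    simpa only [IsEquireplicate, not_forall, exists_prop] using hD_r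
  have hsq : ∑ v ∈ Icc 1 n, r ^ 2 < ∑ v ∈ Icc 1 n, degree D v ^ 2 := by
    have := sum_sq_lt_sum_sq_of_sum_eq (s := Icc 1 n) (f := fun v => (degree D v : ℤ))
      (c := (r : ℤ)) (by exact_mod_cast hsum) (by exact_mod_cast hne)
    exact_mod_cast this
  refine exists_lt_of_sum_lt ?_
  calc ∑ _S ∈ D, k * r = r * (k * D.card) := by rw [sum_const, smul_eq_mul]; ring
    _ = ∑ v ∈ Icc 1 n, r ^ 2 := by
        rw [← hD.sum_degree, hsum]
        simp only [sum_const, smul_eq_mul]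
        ring
    _ < ∑ v ∈ Icc 1 n, degree D v ^ 2 := hsq
    _ = ∑ S ∈ D, ∑ v ∈ S, degree D v := by
        rw [sum_sum_eq_sum_degree_smul fun S hS => (hD S hS).2]
        simp only [smul_eq_mul, sq]

end IsDesign

lemma one_le_maxDegree {n : ℕ} {D : Finset (Finset ℕ)} (h : ¬ IsEquireplicate n 0 D) :
    1 ≤ maxDegree n D := by
  obtain ⟨v, hv, hv0⟩ : ∃ v ∈ Icc 1 n, degree D v ≠ 0 := by
    simpa only [IsEquireplicate, not_forall, exists_prop] using h
  exact Nat.one_le_iff_ne_zero.2 hv0 |>.trans (le_sup hv)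

lemma one_add_mul_sub_one_lt {k r m : ℕ} (hk : 0 < k) (hr : 0 < r)
    (h : (r : ℝ) < ((m : ℝ) - 1) / (k : ℝ) + 1) : 1 + k * (r - 1) < m := by
  have hreal : (r - 1 : ℝ) * k < m - 1 := by
    rw [← lt_div_iff₀ (by exact_mod_cast hk)]
    linarith
  have hcast : ((1 + k * (r - 1) : ℕ) : ℝ) < m := by
    push_cast [Nat.cast_sub hr]
    linarith
  exact_mod_cast hcast

/-- Comparison of the maximum degree of the dependency (line) graph:
(i) if `r < (Δ(D) − 1)/k + 1` then `Δ(L(D†)) < Δ(L(D))`; (ii) if moreover `k = 2` and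
`|D| = |D†|` then `Δ(L(D†)) < Δ(L(D))` with no condition on `r`. -/
theorem maxLineDegree_equireplicate_lt (n k r : ℕ)
    (D Dd : Finset (Finset ℕ))
    (hD : ∀ S ∈ D, S.card = k ∧ S ⊆ Finset.Icc 1 n)
    (hDnonequi : ¬ ∃ r', ∀ v ∈ Finset.Icc 1 n, degree D v = r')
    (hDd : ∀ S ∈ Dd, S.card = k ∧ S ⊆ Finset.Icc 1 n)
    (hequi : ∀ v ∈ Finset.Icc 1 n, degree Dd v = r) :
    ((r : ℝ) < ((maxDegree n D : ℝ) - 1) / (k : ℝ) + 1 →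
      maxLineDegree Dd < maxLineDegree D) ∧
    (k = 2 → D.card = Dd.card → maxLineDegree Dd < maxLineDegree D) := by
  have hk : 0 < k := Nat.pos_of_ne_zero fun hk0 =>
    hDnonequi ⟨0, IsDesign.isEquireplicate_zero (hk0 ▸ hD)⟩
  have hΔ : 1 ≤ maxDegree n D := one_le_maxDegree fun h => hDnonequi ⟨0, h⟩
  have hΔL := maxDegree_le_maxLineDegree n D
  rcases Nat.eq_zero_or_pos r with rfl | hr
  · have hlt : maxLineDegree Dd < maxLineDegree D := by
      rw [IsDesign.eq_empty_of_isEquireplicate_zero hDd hk hequi]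
      exact hΔ.trans hΔL
    exact ⟨fun _ => hlt, fun _ _ => hlt⟩
  have hDd_le := IsDesign.maxLineDegree_le hDd hequi
  refine ⟨fun hlt => ?_, fun hk2 hcard => ?_⟩
  · have := one_add_mul_sub_one_lt hk hr hlt
    omega
  · subst hk2
    obtain ⟨S, hS, hSlt⟩ :=
      IsDesign.exists_sum_degree_gt hD hDd hcard hequi fun h => hDnonequi ⟨r, h⟩
    obtain ⟨u, w, huw, rfl⟩ := card_eq_two.1 (hD S hS).1
    rw [sum_pair huw] at hSlt
    have hpair := degree_add_degree_le_lineDegree_add_one (fun S hS => (hD S hS).1) huw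
    have hSmax : lineDegree D {u, w} ≤ maxLineDegree D := le_sup hS
    omega

end IUStat
end
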